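/- For every a ∈ H₀ (equivalently, every finite complex linear combination of characteristic functions of cylinder sets) there exists a constant M ≥ 0 such that ‖D(a·h) − a·D(h)‖_{L²(μ)} ≤ M ‖h‖_{L²(μ)} for all h ∈ H₀; that is, the commutator [D, π(a)] of D with the multiplication operator π(a) : h ↦ a·h is bounded on H₀. -/

import Mathlib

/-!
The Haar functions `e_{y,j}` are supported on `[y]`, while every `a ∈ H₀` depends only on the
first `N` letters for some `N`, so it is constant on `[y]` once `|y| ≥ N`. Hence multiplication by
`a` commutes with all Haar summands of `D` of level at least `N`, and `[D, π(a)]` is a finite sum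
of commutators of `a` with rank-one operators `h ↦ ⟨g, h⟩ k` with `g`, `k` bounded. On a
probability space each of these is bounded from `L²` to `L^∞`, hence to `L²`.
-/

open MeasureTheory Filter
open scoped ENNReal NNReal

namespace SFT

variable {l : ℕ}

/-- The one-sided subshift of finite type determined by the `l × l` matrix `A`:
infinite sequences with transitions allowed by `A`. -/
abbrev SigmaA (l : ℕ) (A : Matrix (Fin l) (Fin l) ℕ) : Type :=
  {ω : ℕ → Fin l // ∀ k, A (ω k) (ω (k + 1)) = 1}

/-- The left shift `σ` on `SigmaA l A`. -/
def shift {A : Matrix (Fin l) (Fin l) ℕ} (ω : SigmaA l A) : SigmaA l A :=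
  ⟨fun n => ω.1 (n + 1), fun k => ω.2 (k + 1)⟩

/-- Birkhoff sums `S_k φ = ∑_{m<k} φ ∘ σ^m`. -/
def birkhoff {A : Matrix (Fin l) (Fin l) ℕ} (φ : SigmaA l A → ℝ) (k : ℕ) (ω : SigmaA l A) : ℝ :=
  ∑ m ∈ Finset.range k, φ (shift^[m] ω)

/-- The matrix `A` has `0`-`1` entries and is irreducible and aperiodic
(some power of `A` has all entries strictly positive). -/
def Primitive (A : Matrix (Fin l) (Fin l) ℕ) : Prop :=
  (∀ i j, A i j = 0 ∨ A i j = 1) ∧ ∃ n : ℕ, 0 < n ∧ ∀ i j, 0 < (A ^ n) i j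

/-- A finite word is admissible, i.e. belongs to `Σ_A^*`. -/
def Admissible (A : Matrix (Fin l) (Fin l) ℕ) (x : List (Fin l)) : Prop :=
  x ≠ [] ∧ ∀ (i : ℕ) (h : i + 1 < x.length), A (x[i]'(by omega)) (x[i + 1]'h) = 1

/-- The cylinder set `[x]` of a finite word (the empty word gives all of `Σ_A`). -/
def cylinder (A : Matrix (Fin l) (Fin l) ℕ) (x : List (Fin l)) : Set (SigmaA l A) :=
  {ω | ∀ (i : ℕ) (h : i < x.length), ω.1 i = x[i]'h}

/-- The initial word `(ω_1, …, ω_k)` of `ω`. -/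
def wordPrefix {A : Matrix (Fin l) (Fin l) ℕ} (ω : SigmaA l A) (k : ℕ) : List (Fin l) :=
  List.ofFn (fun i : Fin k => ω.1 i)

/-- `μ` is a Gibbs measure for the potential `φ` with pressure `P`:
`c⁻¹ ≤ μ([ω_1,…,ω_k]) / exp(S_kφ(ω) − kP) ≤ c` for some `c > 1`. -/
def IsGibbs {A : Matrix (Fin l) (Fin l) ℕ} (φ : SigmaA l A → ℝ) (P : ℝ)
    (μ : Measure (SigmaA l A)) : Prop :=
  ∃ c : ℝ, 1 < c ∧ ∀ (ω : SigmaA l A) (k : ℕ), 0 < k →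
    c⁻¹ ≤ (μ (cylinder A (wordPrefix ω k))).toReal / Real.exp (birkhoff φ k ω - k * P) ∧
      (μ (cylinder A (wordPrefix ω k))).toReal / Real.exp (birkhoff φ k ω - k * P) ≤ c

/-- `φ` is Hölder continuous with respect to the metric `d(ω,υ) = 2^{-(ω ∧ υ)}`:
there are `C` and an exponent `s > 0` with `|φ(ω) − φ(υ)| ≤ C ⬝ d(ω,υ)^s`, i.e.
`|φ(ω) − φ(υ)| ≤ C ⬝ 2^{-sn}` whenever `ω` and `υ` agree in their first `n` coordinates. -/
def HolderCont {A : Matrix (Fin l) (Fin l) ℕ} (φ : SigmaA l A → ℝ) : Prop :=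
  ∃ C s : ℝ, 0 < s ∧ ∀ (ω υ : SigmaA l A) (n : ℕ),
    (∀ i < n, ω.1 i = υ.1 i) → |φ ω - φ υ| ≤ C * (2 : ℝ) ^ (-(s * n))

/-- `α(x)`: the number of children of the word `x` (the row sum of `A` at the
last letter of `x`). -/
def alpha (A : Matrix (Fin l) (Fin l) ℕ) (x : List (Fin l)) : ℕ :=
  match x.getLast? with
  | some a => ∑ i, A a i
  | none => 0

/-- The `m`-th child `x θ_x⁻¹(m)` of the word `x`, the ordering of the children
being given by `θinv x`. -/
def child (θinv : List (Fin l) → ℕ → Fin l) (x : List (Fin l)) (m : ℕ) : List (Fin l) :=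
  x ++ [θinv x m]

/-- The characteristic function of the cylinder `[x]`, as a function on `Σ_A`. -/
noncomputable def indC (A : Matrix (Fin l) (Fin l) ℕ) (x : List (Fin l)) : SigmaA l A → ℂ :=
  (cylinder A x).indicator 1

/-- The `L²(μ)` inner product of two functions (conjugate linear in the first slot). -/
noncomputable def innerMu (A : Matrix (Fin l) (Fin l) ℕ) (μ : Measure (SigmaA l A))
    (f g : SigmaA l A → ℂ) : ℂ :=
  ∫ ω, (starRingEnd ℂ) (f ω) * g ω ∂μ

/-- The Haar function `e_{x,j} = ∑_m μ([xθ_x⁻¹(m)])^{-1/2} ⟨f_{x,m}, U_x f_{x,j}⟩_x χ_{[xθ_x⁻¹(m)]}`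
as a function on `Σ_A`; here `u x m j = ⟨f_{x,m}, U_x f_{x,j}⟩_x` are the matrix
coefficients of `U_x` in the orthonormal basis `(f_{x,m})_m`. -/
noncomputable def haarFun (A : Matrix (Fin l) (Fin l) ℕ) (μ : Measure (SigmaA l A))
    (θinv : List (Fin l) → ℕ → Fin l) (u : List (Fin l) → ℕ → ℕ → ℝ)
    (x : List (Fin l)) (j : ℕ) : SigmaA l A → ℂ := fun ω =>
  ∑ m ∈ Finset.range (alpha A x),
    ((((Real.sqrt ((μ (cylinder A (child θinv x m))).toReal))⁻¹ * u x m j : ℝ) : ℂ)) *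
      indC A (child θinv x m) ω

/-- `H₀`: the complex linear span of the characteristic functions of cylinder sets
of admissible words, together with `χ_{Σ_A}` (the cylinder of the empty word). -/
noncomputable def H0 (A : Matrix (Fin l) (Fin l) ℕ) : Submodule ℂ (SigmaA l A → ℂ) :=
  Submodule.span ℂ {f | ∃ x : List (Fin l), (x = [] ∨ Admissible A x) ∧ f = indC A x}

/-- The operator `D` (the Dirac operator on the dense domain `H₀`, extended to all
functions by the same formula; on `H₀` all but finitely many summands vanish). -/
noncomputable def Dop (A : Matrix (Fin l) (Fin l) ℕ) (μ : Measure (SigmaA l A))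
    (θinv : List (Fin l) → ℕ → Fin l) (u : List (Fin l) → ℕ → ℕ → ℝ)
    (h : SigmaA l A → ℂ) : SigmaA l A → ℂ := fun ω =>
  (∑ a : Fin l,
      (((μ (cylinder A [a])).toReal : ℂ))⁻¹ * innerMu A μ (indC A [a]) h * indC A [a] ω)
    - innerMu A μ (indC A []) h * indC A [] ω
    + ∑' y : List (Fin l),
        Set.indicator {y : List (Fin l) | Admissible A y}
          (fun y => ((((alpha A y : ℝ) - 1) / (μ (cylinder A y)).toReal : ℝ) : ℂ) *
            ∑ j ∈ Finset.range (alpha A y - 1),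
              innerMu A μ (haarFun A μ θinv u y j) h * haarFun A μ θinv u y j ω) y

lemma norm_tsum_sub_mul_tsum_le {β : Type*} {f g : β → ℂ} (c : ℂ) (F : Finset β)
    (hfg : ∀ y ∉ F, f y = c * g y) :
    ‖∑' y, f y - c * ∑' y, g y‖ ≤ ∑ y ∈ F, ‖f y - c * g y‖ := by
  have hdiff : ∀ y ∉ F, f y - c * g y = 0 := fun y hy => sub_eq_zero.2 (hfg y hy)
  rw [← tsum_mul_left]
  by_cases hg : Summable fun y => c * g y
  · have hf : Summable f := by
      simpa using (summable_of_ne_finset_zero hdiff).add hg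
    rw [← hf.tsum_sub hg, tsum_eq_sum hdiff]
    exact norm_sum_le _ _
  · have hf : ¬ Summable f := fun hf => hg (by
      simpa using hf.sub (summable_of_ne_finset_zero hdiff))
    rw [tsum_eq_zero_of_not_summable hf, tsum_eq_zero_of_not_summable hg, sub_zero, norm_zero]
    exact Finset.sum_nonneg fun _ _ => norm_nonneg _

section PointwiseBounded

variable {α : Type*} [MeasurableSpace α] {μ : Measure α}

def IsPointwiseL2Bounded (μ : Measure α) (T : (α → ℂ) → α → ℂ) : Prop :=
  ∃ C, 0 ≤ C ∧ ∀ f, MemLp f 2 μ → ∀ x, ‖T f x‖ ≤ C * (eLpNorm f 2 μ).toReal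

namespace IsPointwiseL2Bounded

lemma zero : IsPointwiseL2Bounded μ fun _ _ => 0 :=
  ⟨0, le_rfl, fun f _ x => by simp⟩

lemma add {S T : (α → ℂ) → α → ℂ} (hS : IsPointwiseL2Bounded μ S)
    (hT : IsPointwiseL2Bounded μ T) : IsPointwiseL2Bounded μ fun f x => S f x + T f x := by
  obtain ⟨C, hC, hS⟩ := hS
  obtain ⟨C', hC', hT⟩ := hT
  refine ⟨C + C', add_nonneg hC hC', fun f hf x => ?_⟩
  rw [add_mul]
  exact (norm_add_le _ _).trans (add_le_add (hS f hf x) (hT f hf x))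

lemma sub {S T : (α → ℂ) → α → ℂ} (hS : IsPointwiseL2Bounded μ S)
    (hT : IsPointwiseL2Bounded μ T) : IsPointwiseL2Bounded μ fun f x => S f x - T f x := by
  obtain ⟨C, hC, hS⟩ := hS
  obtain ⟨C', hC', hT⟩ := hT
  refine ⟨C + C', add_nonneg hC hC', fun f hf x => ?_⟩
  rw [add_mul]
  exact (norm_sub_le _ _).trans (add_le_add (hS f hf x) (hT f hf x))

lemma const_mul {T : (α → ℂ) → α → ℂ} (hT : IsPointwiseL2Bounded μ T) (c : ℂ) :
    IsPointwiseL2Bounded μ fun f x => c * T f x := by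
  obtain ⟨C, hC, hT⟩ := hT
  refine ⟨‖c‖ * C, by positivity, fun f hf x => ?_⟩
  rw [norm_mul, mul_assoc]
  exact mul_le_mul_of_nonneg_left (hT f hf x) (norm_nonneg c)

lemma finset_sum {ι : Type*} (s : Finset ι) {T : ι → (α → ℂ) → α → ℂ}
    (hT : ∀ i ∈ s, IsPointwiseL2Bounded μ (T i)) :
    IsPointwiseL2Bounded μ fun f x => ∑ i ∈ s, T i f x := by
  induction s using Finset.cons_induction with
  | empty => simpa using zero
  | cons i s hi ih =>
    simp only [Finset.sum_cons]
    exact (hT i (Finset.mem_cons_self i s)).add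
      (ih fun j hj => hT j (Finset.mem_cons_of_mem hj))

end IsPointwiseL2Bounded

lemma norm_integral_conj_mul_le [IsProbabilityMeasure μ] {g f : α → ℂ} {B : ℝ}
    (hg : ∀ x, ‖g x‖ ≤ B) (hf : MemLp f 2 μ) :
    ‖∫ x, starRingEnd ℂ (g x) * f x ∂μ‖ ≤ B * (eLpNorm f 2 μ).toReal := by
  have : Nonempty α := nonempty_of_isProbabilityMeasure μ
  have hB : 0 ≤ B := (norm_nonneg _).trans (hg (Classical.arbitrary α))
  calc ‖∫ x, starRingEnd ℂ (g x) * f x ∂μ‖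
      ≤ ∫ x, ‖starRingEnd ℂ (g x) * f x‖ ∂μ := norm_integral_le_integral_norm _
    _ ≤ ∫ x, B * ‖f x‖ ∂μ := by
      refine integral_mono_of_nonneg (ae_of_all _ fun x => norm_nonneg _)
        ((hf.integrable one_le_two).norm.const_mul B) (ae_of_all _ fun x => ?_)
      show ‖starRingEnd ℂ (g x) * f x‖ ≤ B * ‖f x‖
      rw [norm_mul, RCLike.norm_conj]
      exact mul_le_mul_of_nonneg_right (hg x) (norm_nonneg _)
    _ = B * (eLpNorm f 1 μ).toReal := by
      rw [integral_const_mul, integral_norm_eq_lintegral_enorm hf.1,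
        eLpNorm_one_eq_lintegral_enorm]
    _ ≤ B * (eLpNorm f 2 μ).toReal := by
      gcongr
      · exact hf.eLpNorm_ne_top
      · exact eLpNorm_le_eLpNorm_of_exponent_le one_le_two hf.1

lemma isPointwiseL2Bounded_rankOne [IsProbabilityMeasure μ] {g k : α → ℂ} {B K : ℝ}
    (hg : ∀ x, ‖g x‖ ≤ B) (hk : ∀ x, ‖k x‖ ≤ K) :
    IsPointwiseL2Bounded μ fun f x => (∫ y, starRingEnd ℂ (g y) * f y ∂μ) * k x := by
  have : Nonempty α := nonempty_of_isProbabilityMeasure μ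
  have hB : 0 ≤ B := (norm_nonneg _).trans (hg (Classical.arbitrary α))
  have hK : 0 ≤ K := (norm_nonneg _).trans (hk (Classical.arbitrary α))
  refine ⟨B * K, mul_nonneg hB hK, fun f hf x => ?_⟩
  rw [norm_mul, mul_right_comm]
  exact mul_le_mul (norm_integral_conj_mul_le hg hf) (hk x) (norm_nonneg _)
    (mul_nonneg hB ENNReal.toReal_nonneg)

lemma IsPointwiseL2Bounded.commutator {T : (α → ℂ) → α → ℂ} (hT : IsPointwiseL2Bounded μ T)
    {a : α → ℂ} {Ca : ℝ} (ha : ∀ x, ‖a x‖ ≤ Ca) (ham : AEStronglyMeasurable a μ) :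
    IsPointwiseL2Bounded μ fun f x => T (fun y => a y * f y) x - a x * T f x := by
  obtain ⟨C, hC, hT⟩ := hT
  obtain ⟨Ca, hCa, ha⟩ : ∃ Ca', 0 ≤ Ca' ∧ ∀ x, ‖a x‖ ≤ Ca' :=
    ⟨max Ca 0, le_max_right _ _, fun x => (ha x).trans (le_max_left _ _)⟩
  refine ⟨2 * Ca * C, by positivity, fun f hf x => ?_⟩
  have hmul : ∀ᵐ y ∂μ, ‖a y * f y‖ ≤ Ca * ‖f y‖ := ae_of_all _ fun y => by
    rw [norm_mul]
    exact mul_le_mul_of_nonneg_right (ha y) (norm_nonneg _)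
  have hnorm : (eLpNorm (fun y => a y * f y) 2 μ).toReal ≤ Ca * (eLpNorm f 2 μ).toReal := by
    rw [← ENNReal.toReal_ofReal hCa, ← ENNReal.toReal_mul]
    exact ENNReal.toReal_mono (by finiteness [hf.eLpNorm_ne_top])
      (eLpNorm_le_mul_eLpNorm_of_ae_le_mul hmul 2)
  calc ‖T (fun y => a y * f y) x - a x * T f x‖
      ≤ C * (eLpNorm (fun y => a y * f y) 2 μ).toReal + Ca * (C * (eLpNorm f 2 μ).toReal) := by
        refine (norm_sub_le _ _).trans (add_le_add (hT _ (hf.of_le_mul (ham.mul hf.1) hmul) x) ?_)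
        rw [norm_mul]
        exact mul_le_mul (ha x) (hT f hf x) (norm_nonneg _) hCa
    _ ≤ C * (Ca * (eLpNorm f 2 μ).toReal) + Ca * (C * (eLpNorm f 2 μ).toReal) := by gcongr
    _ = 2 * Ca * C * (eLpNorm f 2 μ).toReal := by ring

lemma eLpNorm_le_ofReal_mul_of_forall_norm_le {E F : Type*} [NormedAddCommGroup E]
    [NormedAddCommGroup F] [IsProbabilityMeasure μ]
    {g : α → E} {h : α → F} {p q : ℝ≥0∞} {M : ℝ} (hM : 0 ≤ M) (hh : eLpNorm h q μ ≠ ∞)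
    (hg : ∀ x, ‖g x‖ ≤ M * (eLpNorm h q μ).toReal) :
    eLpNorm g p μ ≤ ENNReal.ofReal M * eLpNorm h q μ := by
  refine (eLpNorm_le_of_ae_bound (ae_of_all _ hg)).trans_eq ?_
  rw [measure_univ, ENNReal.one_rpow, one_mul, ENNReal.ofReal_mul hM,
    ENNReal.ofReal_toReal hh]

end PointwiseBounded

variable {A : Matrix (Fin l) (Fin l) ℕ}

lemma measurableSet_cylinder (x : List (Fin l)) : MeasurableSet (cylinder A x) := by
  have hx : cylinder A x = ⋂ i : Fin x.length, {ω : SigmaA l A | ω.1 i = x[i]} := by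
    ext ω
    simp only [cylinder, Set.mem_ofPred_eq, Set.mem_iInter]
    exact ⟨fun h i => h i i.2, fun h i hi => h ⟨i, hi⟩⟩
  rw [hx]
  exact MeasurableSet.iInter fun i =>
    ((measurable_pi_apply _).comp measurable_subtype_coe) (measurableSet_singleton _)

lemma measurable_indC (x : List (Fin l)) : Measurable (indC A x) :=
  measurable_const.indicator (measurableSet_cylinder x)

lemma norm_indC_le (x : List (Fin l)) (ω : SigmaA l A) : ‖indC A x ω‖ ≤ 1 := by
  by_cases h : ω ∈ cylinder A x <;> simp [indC, h]

lemma cylinder_append_subset (x z : List (Fin l)) : cylinder A (x ++ z) ⊆ cylinder A x :=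
  fun ω hω i hi => by
    rw [hω i (by simp; omega), List.getElem_append_left hi]

def DependsOnFirst (f : SigmaA l A → ℂ) (N : ℕ) : Prop :=
  ∀ ω υ : SigmaA l A, (∀ i < N, ω.1 i = υ.1 i) → f ω = f υ

lemma dependsOnFirst_indC (x : List (Fin l)) : DependsOnFirst (indC A x) x.length := by
  intro ω υ hωυ
  have hmem : ω ∈ cylinder A x ↔ υ ∈ cylinder A x :=
    forall₂_congr fun i hi => by rw [hωυ i hi]
  by_cases hω : ω ∈ cylinder A x
  · simp [indC, hω, hmem.1 hω]
  · simp [indC, hω, mt hmem.2 hω]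

lemma DependsOnFirst.mono {f : SigmaA l A → ℂ} {N M : ℕ} (hf : DependsOnFirst f N)
    (hNM : N ≤ M) : DependsOnFirst f M :=
  fun ω υ h => hf ω υ fun i hi => h i (lt_of_lt_of_le hi hNM)

lemma DependsOnFirst.eq_of_mem_cylinder {f : SigmaA l A → ℂ} {N : ℕ} (hf : DependsOnFirst f N)
    {y : List (Fin l)} (hy : N ≤ y.length) {ω υ : SigmaA l A} (hω : ω ∈ cylinder A y)
    (hυ : υ ∈ cylinder A y) : f ω = f υ :=
  hf ω υ fun i hi => by
    have hi' : i < y.length := lt_of_lt_of_le hi hy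
    rw [hω i hi', hυ i hi']

lemma exists_dependsOnFirst_of_mem_H0 {f : SigmaA l A → ℂ} (hf : f ∈ H0 A) :
    ∃ N, DependsOnFirst f N := by
  induction hf using Submodule.span_induction with
  | mem f hf =>
    obtain ⟨x, -, rfl⟩ := hf
    exact ⟨x.length, dependsOnFirst_indC x⟩
  | zero => exact ⟨0, fun _ _ _ => rfl⟩
  | add f g _ _ hf hg =>
    obtain ⟨N, hN⟩ := hf
    obtain ⟨M, hM⟩ := hg
    exact ⟨max N M, fun ω υ h => by
      simp only [Pi.add_apply, (hN.mono (le_max_left N M)) ω υ h,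
        (hM.mono (le_max_right N M)) ω υ h]⟩
  | smul c f _ hf =>
    obtain ⟨N, hN⟩ := hf
    exact ⟨N, fun ω υ h => by simp only [Pi.smul_apply, hN ω υ h]⟩

lemma exists_norm_le_of_mem_H0 {f : SigmaA l A → ℂ} (hf : f ∈ H0 A) :
    ∃ C, ∀ ω, ‖f ω‖ ≤ C := by
  induction hf using Submodule.span_induction with
  | mem f hf =>
    obtain ⟨x, -, rfl⟩ := hf
    exact ⟨1, norm_indC_le x⟩
  | zero => exact ⟨0, fun _ => by simp⟩
  | add f g _ _ hf hg =>
    obtain ⟨C, hC⟩ := hf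
    obtain ⟨C', hC'⟩ := hg
    exact ⟨C + C', fun ω => (norm_add_le _ _).trans (add_le_add (hC ω) (hC' ω))⟩
  | smul c f _ hf =>
    obtain ⟨C, hC⟩ := hf
    exact ⟨‖c‖ * C, fun ω => by
      rw [Pi.smul_apply, norm_smul]
      exact mul_le_mul_of_nonneg_left (hC ω) (norm_nonneg c)⟩

lemma measurable_of_mem_H0 {f : SigmaA l A → ℂ} (hf : f ∈ H0 A) : Measurable f := by
  induction hf using Submodule.span_induction with
  | mem f hf =>
    obtain ⟨x, -, rfl⟩ := hf
    exact measurable_indC x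
  | zero => exact measurable_const
  | add f g _ _ hf hg => exact hf.add hg
  | smul c f _ hf => exact hf.const_smul c

lemma memLp_of_mem_H0 {μ : Measure (SigmaA l A)} [IsFiniteMeasure μ] {f : SigmaA l A → ℂ}
    (hf : f ∈ H0 A) (p : ℝ≥0∞) : MemLp f p μ := by
  obtain ⟨C, hC⟩ := exists_norm_le_of_mem_H0 hf
  exact MemLp.of_bound (measurable_of_mem_H0 hf).aestronglyMeasurable C (ae_of_all _ hC)

variable {μ : Measure (SigmaA l A)} {θinv : List (Fin l) → ℕ → Fin l}
  {u : List (Fin l) → ℕ → ℕ → ℝ}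

lemma haarFun_eq_zero_of_notMem {y : List (Fin l)} {ω : SigmaA l A} (hω : ω ∉ cylinder A y)
    (j : ℕ) : haarFun A μ θinv u y j ω = 0 :=
  Finset.sum_eq_zero fun m _ => by
    have hm : ω ∉ cylinder A (child θinv y m) := fun h => hω (cylinder_append_subset _ _ h)
    rw [indC, Set.indicator_of_notMem hm, mul_zero]

lemma exists_norm_haarFun_le (y : List (Fin l)) (j : ℕ) :
    ∃ B, ∀ ω, ‖haarFun A μ θinv u y j ω‖ ≤ B := by
  refine ⟨∑ m ∈ Finset.range (alpha A y),
    ‖(((Real.sqrt (μ (cylinder A (child θinv y m))).toReal)⁻¹ * u y m j : ℝ) : ℂ)‖,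
    fun ω => (norm_sum_le _ _).trans (Finset.sum_le_sum fun m _ => ?_)⟩
  rw [norm_mul]
  exact mul_le_of_le_one_right (norm_nonneg _) (norm_indC_le _ ω)

/-- Since `e_{y,j}` is supported on `[y]`, it commutes with multiplication by any `a` that is
constant on `[y]`. -/
lemma innerMu_haarFun_mul_mul {a : SigmaA l A → ℂ} {N : ℕ} (ha : DependsOnFirst a N)
    {y : List (Fin l)} (hy : N ≤ y.length) (h : SigmaA l A → ℂ) (j : ℕ) (ω : SigmaA l A) :
    innerMu A μ (haarFun A μ θinv u y j) (fun υ => a υ * h υ) * haarFun A μ θinv u y j ω =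
      a ω * (innerMu A μ (haarFun A μ θinv u y j) h * haarFun A μ θinv u y j ω) := by
  by_cases hω : ω ∈ cylinder A y
  · have hinner : innerMu A μ (haarFun A μ θinv u y j) (fun υ => a υ * h υ) =
        a ω * innerMu A μ (haarFun A μ θinv u y j) h := by
      rw [innerMu, innerMu, ← integral_const_mul]
      congr 1 with υ
      by_cases hυ : υ ∈ cylinder A y
      · rw [ha.eq_of_mem_cylinder hy hυ hω]
        ring
      · simp [haarFun_eq_zero_of_notMem hυ]
    rw [hinner, mul_assoc]
  · simp [haarFun_eq_zero_of_notMem hω]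

noncomputable def levelOnePart (A : Matrix (Fin l) (Fin l) ℕ) (μ : Measure (SigmaA l A))
    (h : SigmaA l A → ℂ) : SigmaA l A → ℂ := fun ω =>
  (∑ a : Fin l,
      (((μ (cylinder A [a])).toReal : ℂ))⁻¹ * innerMu A μ (indC A [a]) h * indC A [a] ω)
    - innerMu A μ (indC A []) h * indC A [] ω

noncomputable def haarPart (A : Matrix (Fin l) (Fin l) ℕ) (μ : Measure (SigmaA l A))
    (θinv : List (Fin l) → ℕ → Fin l) (u : List (Fin l) → ℕ → ℕ → ℝ) (y : List (Fin l))
    (h : SigmaA l A → ℂ) : SigmaA l A → ℂ := fun ω =>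
  Set.indicator {y : List (Fin l) | Admissible A y}
    (fun y => ((((alpha A y : ℝ) - 1) / (μ (cylinder A y)).toReal : ℝ) : ℂ) *
      ∑ j ∈ Finset.range (alpha A y - 1),
        innerMu A μ (haarFun A μ θinv u y j) h * haarFun A μ θinv u y j ω) y

lemma Dop_apply (h : SigmaA l A → ℂ) (ω : SigmaA l A) :
    Dop A μ θinv u h ω = levelOnePart A μ h ω + ∑' y, haarPart A μ θinv u y h ω :=
  rfl

lemma isPointwiseL2Bounded_levelOnePart [IsProbabilityMeasure μ] :
    IsPointwiseL2Bounded μ (levelOnePart A μ) := by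
  unfold levelOnePart
  simp only [mul_assoc]
  exact (IsPointwiseL2Bounded.finset_sum _ fun a _ =>
    (isPointwiseL2Bounded_rankOne (norm_indC_le [a]) (norm_indC_le [a])).const_mul _).sub
    (isPointwiseL2Bounded_rankOne (norm_indC_le []) (norm_indC_le []))

lemma isPointwiseL2Bounded_haarPart [IsProbabilityMeasure μ] (y : List (Fin l)) :
    IsPointwiseL2Bounded μ (haarPart A μ θinv u y) := by
  by_cases hy : y ∈ {y : List (Fin l) | Admissible A y}
  · unfold haarPart
    simp only [Set.indicator_of_mem hy]
    refine (IsPointwiseL2Bounded.finset_sum _ fun j _ => ?_).const_mul _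
    obtain ⟨B, hB⟩ := exists_norm_haarFun_le (μ := μ) (θinv := θinv) (u := u) y j
    exact isPointwiseL2Bounded_rankOne hB hB
  · unfold haarPart
    simp only [Set.indicator_of_notMem hy]
    exact IsPointwiseL2Bounded.zero

lemma haarPart_mul_of_dependsOnFirst {a : SigmaA l A → ℂ} {N : ℕ} (ha : DependsOnFirst a N)
    {y : List (Fin l)} (hy : N ≤ y.length) (h : SigmaA l A → ℂ) (ω : SigmaA l A) :
    haarPart A μ θinv u y (fun υ => a υ * h υ) ω = a ω * haarPart A μ θinv u y h ω := by
  by_cases hadm : y ∈ {y : List (Fin l) | Admissible A y}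
  · simp only [haarPart, Set.indicator_of_mem hadm, innerMu_haarFun_mul_mul ha hy,
      ← Finset.mul_sum]
    ring
  · simp only [haarPart, Set.indicator_of_notMem hadm, mul_zero]

theorem commutator_bounded_general
    (A : Matrix (Fin l) (Fin l) ℕ)
    (μ : Measure (SigmaA l A)) [IsProbabilityMeasure μ]
    (θinv : List (Fin l) → ℕ → Fin l)
    (u : List (Fin l) → ℕ → ℕ → ℝ) :
    ∀ a ∈ H0 A, ∃ M : ℝ, 0 ≤ M ∧ ∀ h ∈ H0 A,
      eLpNorm (fun ω => Dop A μ θinv u (fun ω' => a ω' * h ω') ω - a ω * Dop A μ θinv u h ω) 2 μ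
        ≤ ENNReal.ofReal M * eLpNorm h 2 μ := by
  intro a ha
  obtain ⟨Ca, hCa⟩ := exists_norm_le_of_mem_H0 ha
  obtain ⟨N, hN⟩ := exists_dependsOnFirst_of_mem_H0 ha
  have ham := (measurable_of_mem_H0 ha).aestronglyMeasurable (μ := μ)
  obtain ⟨C₀, hC₀, hlevelOne⟩ := isPointwiseL2Bounded_levelOnePart.commutator hCa ham
  choose C hC hhaar using fun y : List (Fin l) =>
    (isPointwiseL2Bounded_haarPart (θinv := θinv) (u := u) y).commutator hCa ham
  -- `a` is constant on the cylinders of all words outside `F`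
  set F := (List.finite_length_lt (Fin l) N).toFinset
  have hF : ∀ y ∉ F, N ≤ y.length := fun y hy => by simpa [F] using hy
  have hM : 0 ≤ C₀ + ∑ y ∈ F, C y := add_nonneg hC₀ (Finset.sum_nonneg fun y _ => hC y)
  refine ⟨_, hM, fun h hh => ?_⟩
  have hh2 : MemLp h 2 μ := memLp_of_mem_H0 hh 2
  refine eLpNorm_le_ofReal_mul_of_forall_norm_le hM hh2.eLpNorm_ne_top fun ω => ?_
  simp only [Dop_apply]
  calc _ = ‖(levelOnePart A μ (fun ω' => a ω' * h ω') ω - a ω * levelOnePart A μ h ω) +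
        (∑' y, haarPart A μ θinv u y (fun ω' => a ω' * h ω') ω -
          a ω * ∑' y, haarPart A μ θinv u y h ω)‖ := by congr 1; ring
    _ ≤ C₀ * (eLpNorm h 2 μ).toReal + ∑ y ∈ F, C y * (eLpNorm h 2 μ).toReal := by
      refine (norm_add_le _ _).trans (add_le_add (hlevelOne h hh2 ω) ?_)
      refine (norm_tsum_sub_mul_tsum_le _ F fun y hy => ?_).trans
        (Finset.sum_le_sum fun y _ => hhaar y h hh2 ω)
      exact haarPart_mul_of_dependsOnFirst hN (hF y hy) h ω
    _ = (C₀ + ∑ y ∈ F, C y) * (eLpNorm h 2 μ).toReal := by rw [add_mul, Finset.sum_mul]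

/-- For every `a ∈ H₀` the commutator `[D, π(a)]` is bounded on `H₀`:
`‖D(a·h) − a·D(h)‖₂ ≤ M ‖h‖₂` for some `M ≥ 0` and all `h ∈ H₀`. -/
theorem commutator_bounded
    (hl : 2 ≤ l) (A : Matrix (Fin l) (Fin l) ℕ) (hA : Primitive A)
    (φ : SigmaA l A → ℝ) (hφ : HolderCont φ) (P : ℝ)
    (μ : Measure (SigmaA l A)) [IsProbabilityMeasure μ] (hGibbs : IsGibbs φ P μ)
    (θinv : List (Fin l) → ℕ → Fin l)
    (hθ : ∀ (x : List (Fin l)) (hx : Admissible A x),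
      Set.BijOn (θinv x) (Set.Iio (alpha A x)) {y : Fin l | A (x.getLast hx.1) y = 1})
    (u : List (Fin l) → ℕ → ℕ → ℝ)
    (hu_orth : ∀ x, Admissible A x → ∀ j < alpha A x, ∀ j' < alpha A x,
      ∑ m ∈ Finset.range (alpha A x), u x m j * u x m j' = if j = j' then 1 else 0)
    (hu_last : ∀ x, Admissible A x → ∀ m < alpha A x,
      u x m (alpha A x - 1) =
        (Real.sqrt ((μ (cylinder A x)).toReal))⁻¹ *
          Real.sqrt ((μ (cylinder A (child θinv x m))).toReal)) :
    ∀ a ∈ H0 A, ∃ M : ℝ, 0 ≤ M ∧ ∀ h ∈ H0 A,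
      eLpNorm (fun ω => Dop A μ θinv u (fun ω' => a ω' * h ω') ω - a ω * Dop A μ θinv u h ω) 2 μ
        ≤ ENNReal.ofReal M * eLpNorm h 2 μ :=
  commutator_bounded_general A μ θinv u

end SFT
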